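/- arXiv:0704.1039 — 3 statements merged into one kernel-verified Lean document; each statement's English description precedes it below -/
import Mathlib

section
/- Let φ : E → F be a surjective linear map of (real) vector spaces, ℓ : E → ℝ a nonzero linear functional with ker φ ⊆ ker ℓ, let x_y ∈ E and set y = φ(x_y). Define φ̃ : E → F by φ̃(x) = φ(x) − ℓ(x)·y. Then the image of φ̃ equals φ(ker ℓ) if and only if ℓ(x_y) = 1. -/
/-! `φ - ℓ.smulRight (φ x)` factors as `φ ∘ P` with `P = id - ℓ.smulRight x`, so its range is
`φ (range P)`. Since `ℓ ∘ P = (1 - ℓ x) • ℓ`, the map `P` lands in `ker ℓ` exactly when `ℓ x = 1`, and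
is then a projection onto `ker ℓ`. As `ker φ ≤ ker ℓ`, the image `φ (range P)` lies in `φ (ker ℓ)`
only if `range P` already lies in `ker ℓ`. -/

namespace LinearMap

variable {R E F : Type*} [CommRing R] [AddCommGroup E] [Module R E] [AddCommGroup F] [Module R F]

theorem sub_smulRight_map_eq_comp (φ : E →ₗ[R] F) (ℓ : E →ₗ[R] R) (x : E) :
    φ - ℓ.smulRight (φ x) = φ ∘ₗ (id - ℓ.smulRight x) := by
  ext v
  simp

theorem comp_id_sub_smulRight_self (ℓ : E →ₗ[R] R) (x : E) :
    ℓ ∘ₗ (id - ℓ.smulRight x) = (1 - ℓ x) • ℓ := by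
  ext v
  simp only [comp_apply, sub_apply, id_apply, smulRight_apply, map_sub, map_smul, smul_eq_mul,
    smul_apply]
  ring

theorem range_id_sub_smulRight_self {ℓ : E →ₗ[R] R} {x : E} (h : ℓ x = 1) :
    range (id - ℓ.smulRight x) = ker ℓ := by
  apply le_antisymm
  · rw [range_le_ker_iff, comp_id_sub_smulRight_self, h, sub_self, zero_smul]
  · intro w hw
    refine ⟨w, ?_⟩
    simp [mem_ker.mp hw]

theorem range_id_sub_smulRight_self_le_ker_iff {K V : Type*} [Field K] [AddCommGroup V] [Module K V]
    {ℓ : V →ₗ[K] K} (hℓ : ℓ ≠ 0) (x : V) :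
    range (id - ℓ.smulRight x) ≤ ker ℓ ↔ ℓ x = 1 := by
  rw [range_le_ker_iff, comp_id_sub_smulRight_self, smul_eq_zero, or_iff_left hℓ, sub_eq_zero,
    eq_comm]

end LinearMap

theorem stmt_0_general (E F : Type*) [AddCommGroup E] [Module ℝ E] [AddCommGroup F] [Module ℝ F]
    (φ : E →ₗ[ℝ] F)
    (ℓ : E →ₗ[ℝ] ℝ) (hℓ : ℓ ≠ 0) (hker : LinearMap.ker φ ≤ LinearMap.ker ℓ)
    (x_y : E) (y : F) (hy : y = φ x_y) :
    LinearMap.range (φ - ℓ.smulRight y) = (LinearMap.ker ℓ).map φ ↔ ℓ x_y = 1 := by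
  rw [hy, LinearMap.sub_smulRight_map_eq_comp, LinearMap.range_comp]
  constructor
  · intro h
    rw [← LinearMap.range_id_sub_smulRight_self_le_ker_iff hℓ, ← Submodule.comap_map_eq_self hker,
      ← Submodule.map_le_iff_le_comap, h]
  · intro h
    rw [LinearMap.range_id_sub_smulRight_self h]

theorem stmt_0 (E F : Type*) [AddCommGroup E] [Module ℝ E] [AddCommGroup F] [Module ℝ F]
    (φ : E →ₗ[ℝ] F) (hφ : Function.Surjective φ)
    (ℓ : E →ₗ[ℝ] ℝ) (hℓ : ℓ ≠ 0) (hker : LinearMap.ker φ ≤ LinearMap.ker ℓ)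
    (x_y : E) (y : F) (hy : y = φ x_y) :
    LinearMap.range (φ - ℓ.smulRight y) = (LinearMap.ker ℓ).map φ ↔ ℓ x_y = 1 :=
  stmt_0_general E F φ ℓ hℓ hker x_y y hy
end

section
/- Let φ : E → F be a surjective linear map of real vector spaces, ℓ : E → ℝ a nonzero linear functional with ker φ ⊆ ker ℓ, x_y ∈ E with ℓ(x_y) = 1, y = φ(x_y), and φ̃(x) = φ(x) − ℓ(x)y. Then y ∉ im φ̃, and F = im φ̃ ⊕ ℝ·y, i.e. y spans a one-dimensional complement of the image of φ̃. -/
/-!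
Every `x` splits as `(x - ℓ x • x_y) + ℓ x • x_y` with the first summand in `ker ℓ`, so
`E = ker ℓ ⊔ ℝ ∙ x_y`; applying the surjection `φ` gives `F = φ(ker ℓ) ⊔ ℝ ∙ y`, and
`φ(ker ℓ)` is the image of `φ̃`. The sum is direct because `φ u = y` with `ℓ u = 0` would put
`u - x_y` in `ker φ ⊆ ker ℓ`, forcing `0 = ℓ u = ℓ x_y = 1`.
-/

open LinearMap Submodule

section Ring

variable {R E F : Type*} [Ring R] [AddCommGroup E] [Module R E] [AddCommGroup F] [Module R F]
  {ℓ : E →ₗ[R] R} {x₀ : E}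

theorem LinearMap.range_sub_smulRight_eq_map_ker (φ : E →ₗ[R] F) (hx₀ : ℓ x₀ = 1) :
    range (φ - ℓ.smulRight (φ x₀)) = (ker ℓ).map φ := by
  ext z
  constructor
  · rintro ⟨x, rfl⟩
    refine ⟨x - ℓ x • x₀, by simp [hx₀], ?_⟩
    simp
  · rintro ⟨u, hu, rfl⟩
    exact ⟨u, by simp [mem_ker.1 hu]⟩

theorem LinearMap.ker_sup_span_singleton_eq_top (hx₀ : ℓ x₀ = 1) : ker ℓ ⊔ R ∙ x₀ = ⊤ := by
  refine eq_top_iff.2 fun x _ ↦ ?_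
  rw [← sub_add_cancel x (ℓ x • x₀)]
  exact add_mem_sup (by simp [hx₀]) (smul_mem _ _ (mem_span_singleton_self x₀))

theorem LinearMap.map_ker_sup_span_singleton_eq_top {φ : E →ₗ[R] F}
    (hφ : Function.Surjective φ) (hx₀ : ℓ x₀ = 1) : (ker ℓ).map φ ⊔ R ∙ φ x₀ = ⊤ := by
  rw [← Set.image_singleton, ← map_span, ← Submodule.map_sup, ker_sup_span_singleton_eq_top hx₀,
    Submodule.map_top, range_eq_top.2 hφ]

theorem LinearMap.apply_notMem_map_ker [Nontrivial R] {φ : E →ₗ[R] F} (hker : ker φ ≤ ker ℓ)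
    (hx₀ : ℓ x₀ = 1) : φ x₀ ∉ (ker ℓ).map φ := by
  rintro ⟨u, hu, hφu⟩
  have hdiff : u - x₀ ∈ ker ℓ := hker (by simp [hφu])
  simp [mem_ker.1 hu, hx₀] at hdiff

end Ring

theorem LinearMap.isCompl_map_ker_span_singleton {K E F : Type*} [DivisionRing K]
    [AddCommGroup E] [Module K E] [AddCommGroup F] [Module K F] {φ : E →ₗ[K] F}
    {ℓ : E →ₗ[K] K} {x₀ : E} (hφ : Function.Surjective φ) (hker : ker φ ≤ ker ℓ)
    (hx₀ : ℓ x₀ = 1) : IsCompl ((ker ℓ).map φ) (K ∙ φ x₀) :=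
  ⟨disjoint_span_singleton_of_notMem (apply_notMem_map_ker hker hx₀),
    codisjoint_iff.2 (map_ker_sup_span_singleton_eq_top hφ hx₀)⟩

theorem stmt_1_general (E F : Type*) [AddCommGroup E] [Module ℝ E] [AddCommGroup F] [Module ℝ F]
    (φ : E →ₗ[ℝ] F) (hφ : Function.Surjective φ)
    (ℓ : E →ₗ[ℝ] ℝ) (hker : LinearMap.ker φ ≤ LinearMap.ker ℓ)
    (x_y : E) (hxy : ℓ x_y = 1) (y : F) (hy : y = φ x_y) :
    y ∉ LinearMap.range (φ - ℓ.smulRight y) ∧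
      IsCompl (LinearMap.range (φ - ℓ.smulRight y)) (Submodule.span ℝ {y}) := by
  subst hy
  rw [range_sub_smulRight_eq_map_ker φ hxy]
  exact ⟨apply_notMem_map_ker hker hxy, isCompl_map_ker_span_singleton hφ hker hxy⟩

theorem stmt_1 (E F : Type*) [AddCommGroup E] [Module ℝ E] [AddCommGroup F] [Module ℝ F]
    (φ : E →ₗ[ℝ] F) (hφ : Function.Surjective φ)
    (ℓ : E →ₗ[ℝ] ℝ) (hℓ : ℓ ≠ 0) (hker : LinearMap.ker φ ≤ LinearMap.ker ℓ)
    (x_y : E) (hxy : ℓ x_y = 1) (y : F) (hy : y = φ x_y) :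
    y ∉ LinearMap.range (φ - ℓ.smulRight y) ∧
      IsCompl (LinearMap.range (φ - ℓ.smulRight y)) (Submodule.span ℝ {y}) :=
  stmt_1_general E F φ hφ ℓ hker x_y hxy y hy
end

section
/- Let ρ > 0 and let f : [s₀, s₁] → ℝ be twice differentiable with f''(s) ≥ 4ρ² f(s) for all s ∈ [s₀, s₁]. Then for all s ∈ [s₀, s₁], f(s) ≤ max(f(s₀), f(s₁)) · cosh(2ρ(s − (s₀+s₁)/2)) / cosh(ρ(s₁ − s₀)). -/
/-!
Write `g t = cosh (2ρ (t - m))` with `m` the midpoint, so that `g'' = 4ρ² g`, `g > 0` and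
`g s₀ = g s₁ = cosh (ρ (s₁ - s₀))`. The Wronskian `W = f' g - f g'` has `W' = f'' g - f g'' ≥ 0`,
so it is monotone, and `(f / g)' = W / g²` changes sign at most once, from `-` to `+`.
Hence `f / g` is bounded on `[s₀, s₁]` by its larger endpoint value.
-/

open Set

section MaximumPrinciple

variable {u u' : ℝ → ℝ} {a b : ℝ}

lemma monotoneOn_Icc_of_hasDerivWithinAt_nonneg
    (hu : ∀ t ∈ Icc a b, HasDerivWithinAt u (u' t) (Icc a b) t)
    (hu' : ∀ t ∈ Icc a b, 0 ≤ u' t) : MonotoneOn u (Icc a b) :=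
  monotoneOn_of_hasDerivWithinAt_nonneg (convex_Icc a b)
    (fun t ht => (hu t ht).continuousWithinAt)
    (fun t ht => (hu t (interior_subset ht)).mono interior_subset)
    (fun t ht => hu' t (interior_subset ht))

lemma antitoneOn_Icc_of_hasDerivWithinAt_nonpos
    (hu : ∀ t ∈ Icc a b, HasDerivWithinAt u (u' t) (Icc a b) t)
    (hu' : ∀ t ∈ Icc a b, u' t ≤ 0) : AntitoneOn u (Icc a b) :=
  antitoneOn_of_hasDerivWithinAt_nonpos (convex_Icc a b)
    (fun t ht => (hu t ht).continuousWithinAt)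
    (fun t ht => (hu t (interior_subset ht)).mono interior_subset)
    (fun t ht => hu' t (interior_subset ht))

/-- A function whose derivative is a monotone function times a nonnegative one decreases and then
increases, so it is bounded by its endpoint values. -/
theorem le_max_of_hasDerivWithinAt_mul_of_monotoneOn {v w : ℝ → ℝ}
    (hu : ∀ t ∈ Icc a b, HasDerivWithinAt u (v t * w t) (Icc a b) t)
    (hv : MonotoneOn v (Icc a b)) (hw : ∀ t ∈ Icc a b, 0 ≤ w t) :
    ∀ s ∈ Icc a b, u s ≤ max (u a) (u b) := by
  intro s hs
  rcases le_or_gt (v s) 0 with hvs | hvs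
  · have hsub : Icc a s ⊆ Icc a b := Icc_subset_Icc le_rfl hs.2
    have hanti : AntitoneOn u (Icc a s) :=
      antitoneOn_Icc_of_hasDerivWithinAt_nonpos
        (fun t ht => (hu t (hsub ht)).mono hsub)
        (fun t ht => mul_nonpos_of_nonpos_of_nonneg
          ((hv (hsub ht) hs ht.2).trans hvs) (hw t (hsub ht)))
    exact (hanti (left_mem_Icc.mpr hs.1) (right_mem_Icc.mpr hs.1) hs.1).trans (le_max_left _ _)
  · have hsub : Icc s b ⊆ Icc a b := Icc_subset_Icc hs.1 le_rfl
    have hmono : MonotoneOn u (Icc s b) :=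
      monotoneOn_Icc_of_hasDerivWithinAt_nonneg
        (fun t ht => (hu t (hsub ht)).mono hsub)
        (fun t ht => mul_nonneg (hvs.le.trans (hv hs (hsub ht) ht.1)) (hw t (hsub ht)))
    exact (hmono (left_mem_Icc.mpr hs.2) (right_mem_Icc.mpr hs.2) hs.2).trans (le_max_right _ _)

end MaximumPrinciple

section SturmComparison

variable {f f' f'' g g' g'' : ℝ → ℝ} {a b : ℝ}

lemma hasDerivWithinAt_wronskian {s : Set ℝ} {t : ℝ}
    (hf : HasDerivWithinAt f (f' t) s t) (hf' : HasDerivWithinAt f' (f'' t) s t)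
    (hg : HasDerivWithinAt g (g' t) s t) (hg' : HasDerivWithinAt g' (g'' t) s t) :
    HasDerivWithinAt (fun x => f' x * g x - f x * g' x) (f'' t * g t - f t * g'' t) s t :=
  ((hf'.mul hg).sub (hf.mul hg')).congr_deriv (by ring)

theorem div_le_max_div_of_mul_secondDeriv_le
    (hf : ∀ t ∈ Icc a b, HasDerivWithinAt f (f' t) (Icc a b) t)
    (hf' : ∀ t ∈ Icc a b, HasDerivWithinAt f' (f'' t) (Icc a b) t)
    (hg : ∀ t ∈ Icc a b, HasDerivWithinAt g (g' t) (Icc a b) t)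
    (hg' : ∀ t ∈ Icc a b, HasDerivWithinAt g' (g'' t) (Icc a b) t)
    (hg_pos : ∀ t ∈ Icc a b, 0 < g t)
    (hcomp : ∀ t ∈ Icc a b, f t * g'' t ≤ f'' t * g t) :
    ∀ s ∈ Icc a b, f s / g s ≤ max (f a / g a) (f b / g b) := by
  have hW : MonotoneOn (fun x => f' x * g x - f x * g' x) (Icc a b) :=
    monotoneOn_Icc_of_hasDerivWithinAt_nonneg
      (fun t ht => hasDerivWithinAt_wronskian (hf t ht) (hf' t ht) (hg t ht) (hg' t ht))
      (fun t ht => sub_nonneg.mpr (hcomp t ht))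
  refine le_max_of_hasDerivWithinAt_mul_of_monotoneOn (w := fun t => (g t ^ 2)⁻¹)
    (fun t ht => ?_) hW (fun t _ => inv_nonneg.mpr (sq_nonneg _))
  exact ((hf t ht).div (hg t ht) (hg_pos t ht).ne').congr_deriv (div_eq_mul_inv _ _)

end SturmComparison

lemma hasDerivAt_cosh_mul_sub (c m t : ℝ) :
    HasDerivAt (fun x => Real.cosh (c * (x - m))) (c * Real.sinh (c * (t - m))) t := by
  simpa [mul_comm] using (((hasDerivAt_id t).sub_const m).const_mul c).cosh

lemma hasDerivAt_sinh_mul_sub (c m t : ℝ) :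
    HasDerivAt (fun x => Real.sinh (c * (x - m))) (c * Real.cosh (c * (t - m))) t := by
  simpa [mul_comm] using (((hasDerivAt_id t).sub_const m).const_mul c).sinh

theorem stmt_6_general (ρ : ℝ) (s₀ s₁ : ℝ)
    (f f' f'' : ℝ → ℝ)
    (hf : ∀ s ∈ Set.Icc s₀ s₁, HasDerivWithinAt f (f' s) (Set.Icc s₀ s₁) s)
    (hf' : ∀ s ∈ Set.Icc s₀ s₁, HasDerivWithinAt f' (f'' s) (Set.Icc s₀ s₁) s)
    (hineq : ∀ s ∈ Set.Icc s₀ s₁, 4 * ρ ^ 2 * f s ≤ f'' s) :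
    ∀ s ∈ Set.Icc s₀ s₁,
      f s ≤ max (f s₀) (f s₁) * Real.cosh (2 * ρ * (s - (s₀ + s₁) / 2)) /
        Real.cosh (ρ * (s₁ - s₀)) := by
  set m := (s₀ + s₁) / 2
  have hcosh₀ : Real.cosh (2 * ρ * (s₀ - m)) = Real.cosh (ρ * (s₁ - s₀)) := by
    rw [← Real.cosh_neg]; congr 1; ring
  have hcosh₁ : Real.cosh (2 * ρ * (s₁ - m)) = Real.cosh (ρ * (s₁ - s₀)) := by
    congr 1; ring
  have hcomp : ∀ t ∈ Set.Icc s₀ s₁, f t * ((2 * ρ) * ((2 * ρ) * Real.cosh (2 * ρ * (t - m)))) ≤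
      f'' t * Real.cosh (2 * ρ * (t - m)) := fun t ht => by
    have := mul_le_mul_of_nonneg_right (hineq t ht) (Real.cosh_pos (2 * ρ * (t - m))).le
    linarith
  intro s hs
  have key := div_le_max_div_of_mul_secondDeriv_le hf hf'
    (fun t _ => (hasDerivAt_cosh_mul_sub (2 * ρ) m t).hasDerivWithinAt)
    (fun t _ => ((hasDerivAt_sinh_mul_sub (2 * ρ) m t).const_mul (2 * ρ)).hasDerivWithinAt)
    (fun t _ => Real.cosh_pos _) hcomp
    s hs
  rw [hcosh₀, hcosh₁, max_div_div_right (Real.cosh_pos _).le, div_le_iff₀ (Real.cosh_pos _)] at key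
  rwa [mul_div_right_comm]

theorem stmt_6 (ρ : ℝ) (hρ : 0 < ρ) (s₀ s₁ : ℝ) (hs : s₀ ≤ s₁)
    (f f' f'' : ℝ → ℝ)
    (hf : ∀ s ∈ Set.Icc s₀ s₁, HasDerivWithinAt f (f' s) (Set.Icc s₀ s₁) s)
    (hf' : ∀ s ∈ Set.Icc s₀ s₁, HasDerivWithinAt f' (f'' s) (Set.Icc s₀ s₁) s)
    (hineq : ∀ s ∈ Set.Icc s₀ s₁, 4 * ρ ^ 2 * f s ≤ f'' s) :
    ∀ s ∈ Set.Icc s₀ s₁,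
      f s ≤ max (f s₀) (f s₁) * Real.cosh (2 * ρ * (s - (s₀ + s₁) / 2)) /
        Real.cosh (ρ * (s₁ - s₀)) :=
  stmt_6_general ρ s₀ s₁ f f' f'' hf hf' hineq
end
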